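/- Let k be a field, t, A ∈ k with A ≠ 1, let V be a k-vector space, and let T : V → V be a k-linear map satisfying (T − t·id)(T + id) = 0. Suppose v, w ∈ V satisfy T v = w + ((t−1)/(1−A))·v. Then T w = (A·(1−t)/(1−A))·w + ((t−A)·(1−A·t)/(1−A)²)·v. -/
import Mathlib


/-- Abstract Hecke-algebra computation: if `T` satisfies `(T − t·id)(T + id) = 0` and
`T v = w + ((t−1)/(1−A))·v`, then
`T w = (A·(1−t)/(1−A))·w + ((t−A)·(1−A·t)/(1−A)²)·v`. -/
theorem hecke_action_on_w {k : Type*} [Field k] (t A : k) (hA : A ≠ 1)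
    {V : Type*} [AddCommGroup V] [Module k V]
    (T : Module.End k V)
    (hquad : (T - t • (1 : Module.End k V)) * (T + 1) = 0)
    (v w : V) (hv : T v = w + ((t - 1) / (1 - A)) • v) :
    T w = ((A * (1 - t)) / (1 - A)) • w +
      (((t - A) * (1 - A * t)) / (1 - A) ^ 2) • v := by
  have h1A : (1 : k) - A ≠ 0 := sub_ne_zero.mpr (Ne.symm hA)
  set c : k := (t - 1) / (1 - A) with hc
  -- quadratic relation applied to v
  have hq : T (T v) = (t - 1) • T v + t • v := by
    have := LinearMap.congr_fun hquad v
    simp only [Module.End.mul_apply, LinearMap.add_apply, LinearMap.sub_apply,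
      LinearMap.smul_apply, Module.End.one_apply, LinearMap.zero_apply,
      map_add, map_smul, LinearMap.map_sub] at this
    linear_combination (norm := module) this
  have hw : w = T v - c • v := by rw [hv]; abel
  have hTw : T w = T (T v) - c • T v := by rw [hw, map_sub, map_smul]
  rw [hTw, hq, hv]
  have e1 : t - 1 - c = A * (1 - t) / (1 - A) := by
    rw [hc]; field_simp; ring
  have e2 : (t - 1 - c) * c + t = (t - A) * (1 - A * t) / (1 - A) ^ 2 := by
    rw [hc]; field_simp; ring
  rw [← e1, ← e2]
  module
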